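/- Let f : C → ℝ be convex and differentiable on an open set containing a convex set C in a real inner product space. A point x* ∈ C is a global minimizer of f over C if and only if ⟨∇f(x*), x - x*⟩ ≥ 0 for all x ∈ C. Specialized to f(Q,R) = λ₁(R^{-1/2} Q Q^H R^{-1/2}) on ℬ₀ × ℬ₁ (with ℬ₀ ⊂ ℂ^{N×M}\{0}, ℬ₁ ⊂ Hermitian PD matrices, both convex and closed, and f differentiable at (Q*,R*) with simple largest eigenvalue), (Q*,R*) is optimal if and only if 2 Re(w*^H Q Q*^H w*) - w*^H (λ*(R - R*) + 2 Q* Q*^H) w* ≥ 0 for all Q ∈ ℬ₀, R ∈ ℬ₁, where λ* = λ₁(R*^{-1/2} Q* Q*^H R*^{-1/2}), u₁* a unit principal eigenvector, and w* = R*^{-1/2} u₁*. -/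

import Mathlib

open Matrix Complex
open scoped ComplexOrder

/-- The largest real eigenvalue of a complex matrix (as `sSup` of its set of real
eigenvalues); for a Hermitian matrix this is the largest eigenvalue. -/
noncomputable def lambdaMax {N : ℕ} (A : Matrix (Fin N) (Fin N) ℂ) : ℝ :=
  sSup {t : ℝ | ∃ v : Fin N → ℂ, v ≠ 0 ∧ A.mulVec v = (t : ℂ) • v}

open Classical in
/-- The inverse of the positive definite square root of a positive definite matrix
(junk value `0` if the matrix is not positive definite). -/
noncomputable def isqrt {N : ℕ} (R : Matrix (Fin N) (Fin N) ℂ) : Matrix (Fin N) (Fin N) ℂ :=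
  if h : R.PosDef then ((h.1.eigenvectorUnitary : Matrix (Fin N) (Fin N) ℂ) *
    diagonal ((↑) ∘ (fun x : ℝ => Real.sqrt x) ∘ h.1.eigenvalues) *
    (star h.1.eigenvectorUnitary : Matrix (Fin N) (Fin N) ℂ))⁻¹ else 0

/-- Euclidean norm of a complex vector. -/
noncomputable def vecNorm {N : ℕ} (v : Fin N → ℂ) : ℝ :=
  Real.sqrt (∑ i, Complex.normSq (v i))

/-- Frobenius norm of a complex matrix. -/
noncomputable def frobNorm {N M : ℕ} (X : Matrix (Fin N) (Fin M) ℂ) : ℝ :=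
  Real.sqrt (∑ i, ∑ j, Complex.normSq (X i j))

/-!
Along the segment `(Q_t, R_t) = (Q* + t (Q - Q*), R* + t (R - R*))` the matrix
`M(t) = Q_t Q_tᴴ - λ* R_t = M₀ + t M₁ + t² M₂` is quadratic in `t`, with `M₂ = (Q - Q*)(Q - Q*)ᴴ`
positive semidefinite, and `λ* ≤ f(Q_t, R_t)` iff `wᴴ M(t) w ≥ 0` for some `w ≠ 0` (generalized
Rayleigh quotient). By definition of `λ*`, `M₀` is negative semidefinite with `w*ᴴ M₀ w* = 0`, and
the variational expression is exactly `Re w*ᴴ M₁ w*`. If it is nonnegative, `w*` itself shows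
`λ* ≤ f(Q, R)`. Conversely, if `(Q*, R*)` is optimal, unit witnesses `w_t` for small `t` accumulate
at some `w₀` with `w₀ᴴ M₀ w₀ = 0` and `w₀ᴴ M₁ w₀ ≥ 0`; the first identity makes `w₀` a principal
generalized eigenvector, hence a multiple of `w*` by simplicity of `λ*`.
-/

namespace Matrix

open scoped MatrixOrder

section QuadraticForm

variable {n : Type*} [Fintype n]

lemma star_mulVec_dotProduct_mulVec_mulVec (T M : Matrix n n ℂ) (v : n → ℂ) :
    star (T *ᵥ v) ⬝ᵥ M *ᵥ (T *ᵥ v) = star v ⬝ᵥ (Tᴴ * M * T) *ᵥ v := by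
  rw [star_mulVec, ← dotProduct_mulVec, mulVec_mulVec, mulVec_mulVec, Matrix.mul_assoc]

lemma star_smul_dotProduct_mulVec_smul (M : Matrix n n ℂ) (c : ℂ) (w : n → ℂ) :
    (star (c • w) ⬝ᵥ M *ᵥ (c • w)).re = normSq c * (star w ⬝ᵥ M *ᵥ w).re := by
  rw [star_smul, mulVec_smul, dotProduct_smul, smul_dotProduct, smul_smul, smul_eq_mul,
    Complex.star_def, mul_conj, re_ofReal_mul]

lemma re_star_dotProduct_conjTranspose_mulVec (M : Matrix n n ℂ) (w : n → ℂ) :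
    (star w ⬝ᵥ Mᴴ *ᵥ w).re = (star w ⬝ᵥ M *ᵥ w).re := by
  rw [dotProduct_mulVec, ← star_mulVec, star_dotProduct]
  exact conj_re _

lemma re_dotProduct_sub_smul_mulVec (P R : Matrix n n ℂ) (μ : ℝ) (w : n → ℂ) :
    (star w ⬝ᵥ (P - μ • R) *ᵥ w).re = (star w ⬝ᵥ P *ᵥ w).re - μ * (star w ⬝ᵥ R *ᵥ w).re := by
  rw [sub_mulVec, smul_mulVec, dotProduct_sub, dotProduct_smul, sub_re, smul_re, smul_eq_mul]

lemma continuous_re_star_dotProduct_mulVec (M : Matrix n n ℂ) :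
    Continuous fun w : n → ℂ => (star w ⬝ᵥ M *ᵥ w).re := by
  fun_prop

lemma exists_mem_sphere_re_dotProduct_mulVec_nonneg {M : Matrix n n ℂ} {w : n → ℂ} (hw : w ≠ 0)
    (h : 0 ≤ (star w ⬝ᵥ M *ᵥ w).re) :
    ∃ v ∈ Metric.sphere (0 : n → ℂ) 1, 0 ≤ (star v ⬝ᵥ M *ᵥ v).re := by
  refine ⟨((‖w‖⁻¹ : ℝ) : ℂ) • w, by simp [norm_smul, hw], ?_⟩
  rw [star_smul_dotProduct_mulVec_smul]
  exact mul_nonneg (normSq_nonneg _) h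

theorem exists_re_dotProduct_mulVec_eq_zero_and_nonneg {M₀ M₁ M₂ : Matrix n n ℂ}
    (h₀ : ∀ w, (star w ⬝ᵥ M₀ *ᵥ w).re ≤ 0)
    (h : ∀ t ∈ Set.Ioc (0 : ℝ) 1, ∃ w : n → ℂ, w ≠ 0 ∧
      0 ≤ (star w ⬝ᵥ (M₀ + t • M₁ + t ^ 2 • M₂) *ᵥ w).re) :
    ∃ w : n → ℂ, w ≠ 0 ∧ (star w ⬝ᵥ M₀ *ᵥ w).re = 0 ∧ 0 ≤ (star w ⬝ᵥ M₁ *ᵥ w).re := by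
  set q : Matrix n n ℂ → (n → ℂ) → ℝ := fun M w => (star w ⬝ᵥ M *ᵥ w).re with hq
  have hexpand (t : ℝ) (w : n → ℂ) :
      q (M₀ + t • M₁ + t ^ 2 • M₂) w = q M₀ w + t * q M₁ w + t ^ 2 * q M₂ w := by
    simp only [hq, add_mulVec, smul_mulVec, dotProduct_add, dotProduct_smul, add_re, smul_re,
      smul_eq_mul]
  set t : ℕ → ℝ := fun k => 1 / ((k : ℝ) + 1)
  have ht_mem (k : ℕ) : t k ∈ Set.Ioc (0 : ℝ) 1 :=
    ⟨by positivity, div_le_one_of_le₀ (by linarith [k.cast_nonneg (α := ℝ)]) (by positivity)⟩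
  have hunit (k : ℕ) : ∃ w ∈ Metric.sphere (0 : n → ℂ) 1,
      0 ≤ q M₀ w + t k * q M₁ w + t k ^ 2 * q M₂ w := by
    obtain ⟨w, hw, hnonneg⟩ := h (t k) (ht_mem k)
    simpa only [← hexpand] using exists_mem_sphere_re_dotProduct_mulVec_nonneg hw hnonneg
  choose w hw_mem hw using hunit
  obtain ⟨w₀, hw₀, φ, hφ, hlim⟩ := (isCompact_sphere (0 : n → ℂ) 1).tendsto_subseq hw_mem
  have ht : Filter.Tendsto (t ∘ φ) Filter.atTop (nhds 0) :=
    tendsto_one_div_add_atTop_nhds_zero_nat.comp hφ.tendsto_atTop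
  have hq_lim (M : Matrix n n ℂ) :
      Filter.Tendsto (fun k => q M (w (φ k))) Filter.atTop (nhds (q M w₀)) :=
    ((continuous_re_star_dotProduct_mulVec M).tendsto w₀).comp hlim
  have hq₀ : 0 ≤ q M₀ w₀ := by
    have hlim₀ := ((hq_lim M₀).add (ht.mul (hq_lim M₁))).add ((ht.pow 2).mul (hq_lim M₂))
    rw [zero_mul, zero_pow two_ne_zero, zero_mul, add_zero, add_zero] at hlim₀
    exact ge_of_tendsto' hlim₀ fun k => hw (φ k)
  have hq₁ : 0 ≤ q M₁ w₀ := by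
    have hlim₁ := (hq_lim M₁).add (ht.mul (hq_lim M₂))
    rw [zero_mul, add_zero] at hlim₁
    refine ge_of_tendsto' hlim₁ fun k => ?_
    have hwk := hw (φ k)
    have h₀k := h₀ (w (φ k))
    show 0 ≤ q M₁ (w (φ k)) + t (φ k) * q M₂ (w (φ k))
    -- dividing `0 ≤ q M₀ + t q M₁ + t² q M₂` by `t` and dropping `q M₀ ≤ 0`
    refine (mul_nonneg_iff_of_pos_left (ht_mem (φ k)).1).1 ?_
    nlinarith
  exact ⟨w₀, ne_zero_of_mem_sphere one_ne_zero ⟨w₀, hw₀⟩, le_antisymm (h₀ w₀) hq₀, hq₁⟩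

end QuadraticForm

section Segment

variable {m n : Type*} [Fintype n]

lemma add_smul_mul_conjTranspose_add_smul (A B : Matrix m n ℂ) (t : ℝ) :
    (A + t • B) * (A + t • B)ᴴ = A * Aᴴ + t • (A * Bᴴ + B * Aᴴ) + t ^ 2 • (B * Bᴴ) := by
  simp only [conjTranspose_add, conjTranspose_smul, star_trivial, Matrix.add_mul, Matrix.mul_add,
    Matrix.smul_mul, Matrix.mul_smul, smul_smul, smul_add, pow_two]
  abel

lemma add_smul_sub_mul_conjTranspose_sub_smul (Qs Q : Matrix m n ℂ) (Rs R : Matrix m m ℂ)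
    (μ t : ℝ) :
    (Qs + t • (Q - Qs)) * (Qs + t • (Q - Qs))ᴴ - μ • (Rs + t • (R - Rs)) =
      (Qs * Qsᴴ - μ • Rs) + t • (Qs * (Q - Qs)ᴴ + (Q - Qs) * Qsᴴ - μ • (R - Rs)) +
        t ^ 2 • ((Q - Qs) * (Q - Qs)ᴴ) := by
  rw [add_smul_mul_conjTranspose_add_smul]
  module

variable [Fintype m]

lemma two_mul_re_dotProduct_mul_conjTranspose_sub (Qs Q : Matrix m n ℂ) (Rs R : Matrix m m ℂ)
    (μ : ℝ) (w : m → ℂ) :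
    2 * (star w ⬝ᵥ (Q * Qsᴴ) *ᵥ w).re - (star w ⬝ᵥ (μ • (R - Rs) + (2 : ℝ) • (Qs * Qsᴴ)) *ᵥ w).re =
      (star w ⬝ᵥ (Qs * (Q - Qs)ᴴ + (Q - Qs) * Qsᴴ - μ • (R - Rs)) *ᵥ w).re := by
  have hsym := re_star_dotProduct_conjTranspose_mulVec (Q * Qsᴴ) w
  rw [conjTranspose_mul, conjTranspose_conjTranspose] at hsym
  simp only [conjTranspose_sub, Matrix.mul_sub, Matrix.sub_mul, add_mulVec, sub_mulVec,
    smul_mulVec, dotProduct_add, dotProduct_sub, dotProduct_smul, add_re, sub_re, smul_re,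
    smul_eq_mul] at hsym ⊢
  linarith

end Segment

lemma IsHermitian.posSemidef_algebraMap_sub {n 𝕜 : Type*} [RCLike 𝕜] [Fintype n] [DecidableEq n]
    {A : Matrix n n 𝕜} (hA : A.IsHermitian) {c : ℝ} (hc : ∀ i, hA.eigenvalues i ≤ c) :
    (algebraMap ℝ _ c - A).PosSemidef := by
  refine le_iff.mp (le_algebraMap_of_spectrum_le ?_ hA)
  rw [hA.spectrum_real_eq_range_eigenvalues]
  rintro _ ⟨i, rfl⟩
  exact hc i

lemma PosDef.cfc_sqrt_mul_self {n : Type*} [Fintype n] [DecidableEq n] {R : Matrix n n ℂ}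
    (hR : R.PosDef) : cfc Real.sqrt R * cfc Real.sqrt R = R := by
  rw [← cfc_mul _ _ R]
  conv_rhs => rw [← cfc_id ℝ R hR.1.isSelfAdjoint]
  exact cfc_congr fun x hx => Real.mul_self_sqrt (spectrum_nonneg_of_nonneg hR.posSemidef.nonneg hx)

section LambdaMax

variable {N : ℕ} {A : Matrix (Fin N) (Fin N) ℂ}

lemma IsHermitian.isGreatest_sup'_eigenvalues [Nonempty (Fin N)] (hA : A.IsHermitian) :
    IsGreatest {t : ℝ | ∃ v : Fin N → ℂ, v ≠ 0 ∧ A *ᵥ v = (t : ℂ) • v}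
      (Finset.univ.sup' Finset.univ_nonempty hA.eigenvalues) := by
  obtain ⟨j, -, hj⟩ := Finset.exists_mem_eq_sup' Finset.univ_nonempty hA.eigenvalues
  refine ⟨⟨_, ?_, hj ▸ hA.mulVec_eigenvectorBasis j⟩, ?_⟩
  · exact (WithLp.ofLp_eq_zero 2).ne.2 (hA.eigenvectorBasis.orthonormal.ne_zero j)
  rintro t ⟨v, hv, hAv⟩
  have hpsd := hA.posSemidef_algebraMap_sub
    (c := Finset.univ.sup' Finset.univ_nonempty hA.eigenvalues)
    fun i => Finset.le_sup' hA.eigenvalues (Finset.mem_univ i)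
  have hquad := hpsd.re_dotProduct_nonneg v
  simp only [RCLike.re_to_complex, Algebra.algebraMap_eq_smul_one, sub_mulVec, smul_mulVec,
    one_mulVec, hAv, dotProduct_sub, dotProduct_smul, sub_re, real_smul, re_ofReal_mul,
    smul_eq_mul, sub_nonneg] at hquad
  exact le_of_mul_le_mul_right hquad (pos_iff.1 (dotProduct_star_self_pos_iff.2 hv)).1

lemma IsHermitian.lambdaMax_eq_sup' [Nonempty (Fin N)] (hA : A.IsHermitian) :
    lambdaMax A = Finset.univ.sup' Finset.univ_nonempty hA.eigenvalues :=
  hA.isGreatest_sup'_eigenvalues.csSup_eq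

lemma IsHermitian.posSemidef_algebraMap_lambdaMax_sub (hA : A.IsHermitian) :
    (algebraMap ℝ _ (lambdaMax A) - A).PosSemidef := by
  refine hA.posSemidef_algebraMap_sub fun i => ?_
  have : Nonempty (Fin N) := ⟨i⟩
  exact hA.lambdaMax_eq_sup' ▸ Finset.le_sup' hA.eigenvalues (Finset.mem_univ i)

lemma IsHermitian.exists_mulVec_eq_lambdaMax_smul [Nonempty (Fin N)] (hA : A.IsHermitian) :
    ∃ v : Fin N → ℂ, v ≠ 0 ∧ A *ᵥ v = (lambdaMax A : ℂ) • v :=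
  hA.lambdaMax_eq_sup' ▸ hA.isGreatest_sup'_eigenvalues.1

end LambdaMax

section Isqrt

variable {N : ℕ} {R P : Matrix (Fin N) (Fin N) ℂ}

lemma isqrt_eq_inv_cfc_sqrt (hR : R.PosDef) : isqrt R = (cfc Real.sqrt R)⁻¹ := by
  rw [isqrt, dif_pos hR, hR.1.cfc_eq]
  rfl

lemma PosDef.isUnit_cfc_sqrt (hR : R.PosDef) : IsUnit (cfc Real.sqrt R) :=
  isUnit_of_mul_isUnit_left (hR.cfc_sqrt_mul_self ▸ hR.isUnit)

lemma isqrt_mul_cfc_sqrt (hR : R.PosDef) : isqrt R * cfc Real.sqrt R = 1 := by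
  rw [isqrt_eq_inv_cfc_sqrt hR]
  exact nonsing_inv_mul _ ((isUnit_iff_isUnit_det _).1 hR.isUnit_cfc_sqrt)

lemma cfc_sqrt_mul_isqrt (hR : R.PosDef) : cfc Real.sqrt R * isqrt R = 1 :=
  mul_eq_one_comm.1 (isqrt_mul_cfc_sqrt hR)

lemma isHermitian_isqrt (hR : R.PosDef) : (isqrt R).IsHermitian := by
  rw [isqrt_eq_inv_cfc_sqrt hR]
  exact (cfc_predicate Real.sqrt R : IsSelfAdjoint _).isHermitian.inv

lemma isqrt_mul_mul_isqrt (hR : R.PosDef) : isqrt R * R * isqrt R = 1 := by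
  calc isqrt R * R * isqrt R = isqrt R * (cfc Real.sqrt R * cfc Real.sqrt R) * isqrt R := by
        rw [hR.cfc_sqrt_mul_self]
    _ = (isqrt R * cfc Real.sqrt R) * (cfc Real.sqrt R * isqrt R) := by
        simp only [Matrix.mul_assoc]
    _ = 1 := by rw [isqrt_mul_cfc_sqrt hR, cfc_sqrt_mul_isqrt hR, Matrix.mul_one]

lemma isqrt_mulVec_cfc_sqrt_mulVec (hR : R.PosDef) (w : Fin N → ℂ) :
    isqrt R *ᵥ (cfc Real.sqrt R *ᵥ w) = w := by
  rw [mulVec_mulVec, isqrt_mul_cfc_sqrt hR, one_mulVec]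

lemma isqrt_mulVec_ne_zero (hR : R.PosDef) {v : Fin N → ℂ} (hv : v ≠ 0) : isqrt R *ᵥ v ≠ 0 := by
  intro h
  rw [← one_mulVec v, ← cfc_sqrt_mul_isqrt hR, ← mulVec_mulVec, h, mulVec_zero] at hv
  exact hv rfl

lemma isqrt_mul_mul_isqrt_mulVec_eq_smul (hR : R.PosDef) {μ : ℝ} {v : Fin N → ℂ}
    (hv : P *ᵥ (isqrt R *ᵥ v) = μ • R *ᵥ (isqrt R *ᵥ v)) :
    (isqrt R * P * isqrt R) *ᵥ v = μ • v := by
  rw [← mulVec_mulVec, ← mulVec_mulVec, hv, mulVec_smul, mulVec_mulVec, mulVec_mulVec,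
    isqrt_mul_mul_isqrt hR, one_mulVec]

lemma isHermitian_isqrt_mul_mul_isqrt (hR : R.PosDef) (hP : P.IsHermitian) :
    (isqrt R * P * isqrt R).IsHermitian := by
  simpa only [(isHermitian_isqrt hR).eq] using isHermitian_conjTranspose_mul_mul (isqrt R) hP

lemma PosDef.posSemidef_lambdaMax_smul_sub (hR : R.PosDef) (hP : P.IsHermitian) :
    (lambdaMax (isqrt R * P * isqrt R) • R - P).PosSemidef := by
  set S := cfc Real.sqrt R
  have hS : Sᴴ = S := (cfc_predicate Real.sqrt R : IsSelfAdjoint S)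
  convert ((isHermitian_isqrt_mul_mul_isqrt hR hP).posSemidef_algebraMap_lambdaMax_sub
    ).conjTranspose_mul_mul_same S using 1
  rw [hS, Algebra.algebraMap_eq_smul_one, Matrix.mul_sub, Matrix.sub_mul, Matrix.mul_smul,
    Matrix.smul_mul, Matrix.mul_one, hR.cfc_sqrt_mul_self]
  congr 1
  calc P = (S * isqrt R) * P * (isqrt R * S) := by
        rw [cfc_sqrt_mul_isqrt hR, isqrt_mul_cfc_sqrt hR, Matrix.one_mul, Matrix.mul_one]
    _ = _ := by simp only [Matrix.mul_assoc]

lemma re_dotProduct_sub_lambdaMax_smul_mulVec_nonpos (hR : R.PosDef) (hP : P.IsHermitian)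
    (w : Fin N → ℂ) :
    (star w ⬝ᵥ (P - lambdaMax (isqrt R * P * isqrt R) • R) *ᵥ w).re ≤ 0 := by
  rw [← neg_sub, neg_mulVec, dotProduct_neg, neg_re, neg_nonpos]
  exact (hR.posSemidef_lambdaMax_smul_sub hP).re_dotProduct_nonneg w

lemma star_isqrt_mulVec_dotProduct_sub_smul_mulVec_eq_zero (hR : R.PosDef) {μ : ℝ}
    {u : Fin N → ℂ} (hu : (isqrt R * P * isqrt R) *ᵥ u = (μ : ℂ) • u) :
    star (isqrt R *ᵥ u) ⬝ᵥ (P - μ • R) *ᵥ (isqrt R *ᵥ u) = 0 := by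
  rw [star_mulVec_dotProduct_mulVec_mulVec, (isHermitian_isqrt hR).eq, Matrix.mul_sub,
    Matrix.sub_mul, Matrix.mul_smul, Matrix.smul_mul, isqrt_mul_mul_isqrt hR, sub_mulVec, hu,
    smul_mulVec, one_mulVec, coe_smul, sub_self, dotProduct_zero]

lemma le_lambdaMax_isqrt_mul_mul_isqrt_iff [Nonempty (Fin N)] (hR : R.PosDef) (hP : P.IsHermitian)
    (μ : ℝ) : μ ≤ lambdaMax (isqrt R * P * isqrt R) ↔
      ∃ w : Fin N → ℂ, w ≠ 0 ∧ 0 ≤ (star w ⬝ᵥ (P - μ • R) *ᵥ w).re := by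
  constructor
  · intro hμ
    obtain ⟨v, hv, hAv⟩ := (isHermitian_isqrt_mul_mul_isqrt hR hP).exists_mulVec_eq_lambdaMax_smul
    have hw := isqrt_mulVec_ne_zero hR hv
    refine ⟨_, hw, ?_⟩
    have hzero := congrArg re (star_isqrt_mulVec_dotProduct_sub_smul_mulVec_eq_zero hR hAv)
    rw [re_dotProduct_sub_smul_mulVec, zero_re, sub_eq_zero] at hzero
    rw [re_dotProduct_sub_smul_mulVec, hzero, ← sub_mul]
    exact mul_nonneg (sub_nonneg.2 hμ) (hR.re_dotProduct_pos hw).le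
  · rintro ⟨w, hw, hnonneg⟩
    have hle := re_dotProduct_sub_lambdaMax_smul_mulVec_nonpos hR hP w
    rw [re_dotProduct_sub_smul_mulVec] at hle hnonneg
    have hpos : 0 < (star w ⬝ᵥ R *ᵥ w).re := hR.re_dotProduct_pos hw
    nlinarith

lemma exists_eq_smul_isqrt_mulVec_of_re_dotProduct_eq_zero (hR : R.PosDef) (hP : P.IsHermitian)
    {u : Fin N → ℂ} (hsimple : ∀ v : Fin N → ℂ, (isqrt R * P * isqrt R) *ᵥ v =
      (lambdaMax (isqrt R * P * isqrt R) : ℂ) • v → ∃ c : ℂ, v = c • u)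
    {w : Fin N → ℂ} (hw : (star w ⬝ᵥ (P - lambdaMax (isqrt R * P * isqrt R) • R) *ᵥ w).re = 0) :
    ∃ c : ℂ, w = c • isqrt R *ᵥ u := by
  have hX := hR.posSemidef_lambdaMax_smul_sub hP
  have hker : star w ⬝ᵥ (lambdaMax (isqrt R * P * isqrt R) • R - P) *ᵥ w = 0 := by
    refine Complex.ext ?_ (nonneg_iff.1 (hX.dotProduct_mulVec_nonneg w)).2.symm
    rw [zero_re, ← neg_sub, neg_mulVec, dotProduct_neg, neg_re, hw, neg_zero]
  rw [hX.dotProduct_mulVec_zero_iff, sub_mulVec, smul_mulVec, sub_eq_zero] at hker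
  obtain ⟨c, hc⟩ := hsimple (cfc Real.sqrt R *ᵥ w) (by
    rw [coe_smul]
    refine isqrt_mul_mul_isqrt_mulVec_eq_smul hR ?_
    rw [isqrt_mulVec_cfc_sqrt_mulVec hR]
    exact hker.symm)
  exact ⟨c, by rw [← isqrt_mulVec_cfc_sqrt_mulVec hR w, hc, mulVec_smul]⟩

end Isqrt

end Matrix

theorem optimality_condition_general {N M : ℕ}
    (B₀ : Set (Matrix (Fin N) (Fin M) ℂ)) (B₁ : Set (Matrix (Fin N) (Fin N) ℂ))
    (hB₀conv : Convex ℝ B₀)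
    (hB₁conv : Convex ℝ B₁)
    (hB₁pd : ∀ R ∈ B₁, R.PosDef)
    (Qs : Matrix (Fin N) (Fin M) ℂ) (Rs : Matrix (Fin N) (Fin N) ℂ)
    (hQs : Qs ∈ B₀) (hRs : Rs ∈ B₁)
    (ls : ℝ) (hls : ls = lambdaMax (isqrt Rs * (Qs * Qsᴴ) * isqrt Rs))
    (u₁ : Fin N → ℂ)
    (hu₁ : (isqrt Rs * (Qs * Qsᴴ) * isqrt Rs).mulVec u₁ = (ls : ℂ) • u₁)
    (hu₁n : vecNorm u₁ = 1)
    (hsimple : ∀ v : Fin N → ℂ,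
      (isqrt Rs * (Qs * Qsᴴ) * isqrt Rs).mulVec v = (ls : ℂ) • v → ∃ c : ℂ, v = c • u₁)
    (ws : Fin N → ℂ) (hws : ws = (isqrt Rs).mulVec u₁) :
    (∀ Q ∈ B₀, ∀ R ∈ B₁, ls ≤ lambdaMax (isqrt R * (Q * Qᴴ) * isqrt R)) ↔
    (∀ Q ∈ B₀, ∀ R ∈ B₁,
      0 ≤ 2 * (star ws ⬝ᵥ (Q * Qsᴴ).mulVec ws).re
          - (star ws ⬝ᵥ (ls • (R - Rs) + (2 : ℝ) • (Qs * Qsᴴ)).mulVec ws).re) := by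
  have hRs_pd := hB₁pd Rs hRs
  have hPs := isHermitian_mul_conjTranspose_self Qs
  have hu₁0 : u₁ ≠ 0 := by rintro rfl; simp [vecNorm] at hu₁n
  have : Nonempty (Fin N) := ⟨(Function.ne_iff.1 hu₁0).choose⟩
  have hM₀ws : (star ws ⬝ᵥ (Qs * Qsᴴ - ls • Rs) *ᵥ ws).re = 0 := by
    rw [hws, star_isqrt_mulVec_dotProduct_sub_smul_mulVec_eq_zero hRs_pd hu₁, zero_re]
  simp only [two_mul_re_dotProduct_mul_conjTranspose_sub]
  subst hls
  constructor
  · intro hmin Q hQ R hR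
    obtain ⟨w, hw, hw₀, hw₁⟩ := exists_re_dotProduct_mulVec_eq_zero_and_nonneg
      (re_dotProduct_sub_lambdaMax_smul_mulVec_nonpos hRs_pd hPs) fun t ht => by
        have hQt := hB₀conv.add_smul_sub_mem hQs hQ (Set.Ioc_subset_Icc_self ht)
        have hRt := hB₁conv.add_smul_sub_mem hRs hR (Set.Ioc_subset_Icc_self ht)
        rw [← add_smul_sub_mul_conjTranspose_sub_smul]
        exact (le_lambdaMax_isqrt_mul_mul_isqrt_iff (hB₁pd _ hRt)
          (isHermitian_mul_conjTranspose_self _) _).1 (hmin _ hQt _ hRt)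
    obtain ⟨c, rfl⟩ := exists_eq_smul_isqrt_mulVec_of_re_dotProduct_eq_zero hRs_pd hPs hsimple hw₀
    have hc : c ≠ 0 := by rintro rfl; simp at hw
    rw [star_smul_dotProduct_mulVec_smul, ← hws] at hw₁
    exact (mul_nonneg_iff_of_pos_left (normSq_pos.2 hc)).1 hw₁
  · intro hVI Q hQ R hR
    refine (le_lambdaMax_isqrt_mul_mul_isqrt_iff (hB₁pd R hR)
      (isHermitian_mul_conjTranspose_self Q) _).2 ⟨ws, hws ▸ isqrt_mulVec_ne_zero hRs_pd hu₁0, ?_⟩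
    have hexpand := add_smul_sub_mul_conjTranspose_sub_smul Qs Q Rs R
      (lambdaMax (isqrt Rs * (Qs * Qsᴴ) * isqrt Rs)) 1
    simp only [one_smul, add_sub_cancel, one_pow] at hexpand
    rw [hexpand, add_mulVec, add_mulVec, dotProduct_add, dotProduct_add, add_re, add_re, hM₀ws,
      zero_add]
    exact add_nonneg (hVI Q hQ R hR)
      ((posSemidef_self_mul_conjTranspose _).re_dotProduct_nonneg ws)

/-- first-order optimality condition for minimizing the convex function
`f(Q,R) = λ₁(R^{-1/2} Q Qᴴ R^{-1/2})` over convex closed sets `ℬ₀ × ℬ₁`: with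
`λ* = f(Q*,R*)`, `u₁*` a unit principal eigenvector (assumed simple) and
`w* = R*^{-1/2} u₁*`, the point `(Q*,R*)` is a global minimizer iff
`2 Re(w*ᴴ Q Q*ᴴ w*) - w*ᴴ (λ*(R - R*) + 2 Q* Q*ᴴ) w* ≥ 0` for all `Q ∈ ℬ₀, R ∈ ℬ₁`
(the variational inequality `⟨∇f(x*), x - x*⟩ ≥ 0`). -/
theorem optimality_condition {N M : ℕ}
    (B₀ : Set (Matrix (Fin N) (Fin M) ℂ)) (B₁ : Set (Matrix (Fin N) (Fin N) ℂ))
    (hB₀conv : Convex ℝ B₀) (hB₀cl : IsClosed B₀)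
    (hB₀0 : (0 : Matrix (Fin N) (Fin M) ℂ) ∉ B₀)
    (hB₁conv : Convex ℝ B₁) (hB₁cl : IsClosed B₁)
    (hB₁pd : ∀ R ∈ B₁, R.PosDef)
    (Qs : Matrix (Fin N) (Fin M) ℂ) (Rs : Matrix (Fin N) (Fin N) ℂ)
    (hQs : Qs ∈ B₀) (hRs : Rs ∈ B₁)
    (ls : ℝ) (hls : ls = lambdaMax (isqrt Rs * (Qs * Qsᴴ) * isqrt Rs))
    (u₁ : Fin N → ℂ)
    (hu₁ : (isqrt Rs * (Qs * Qsᴴ) * isqrt Rs).mulVec u₁ = (ls : ℂ) • u₁)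
    (hu₁n : vecNorm u₁ = 1)
    (hsimple : ∀ v : Fin N → ℂ,
      (isqrt Rs * (Qs * Qsᴴ) * isqrt Rs).mulVec v = (ls : ℂ) • v → ∃ c : ℂ, v = c • u₁)
    (ws : Fin N → ℂ) (hws : ws = (isqrt Rs).mulVec u₁) :
    (∀ Q ∈ B₀, ∀ R ∈ B₁, ls ≤ lambdaMax (isqrt R * (Q * Qᴴ) * isqrt R)) ↔
    (∀ Q ∈ B₀, ∀ R ∈ B₁,
      0 ≤ 2 * (star ws ⬝ᵥ (Q * Qsᴴ).mulVec ws).re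
          - (star ws ⬝ᵥ (ls • (R - Rs) + (2 : ℝ) • (Qs * Qsᴴ)).mulVec ws).re) :=
  optimality_condition_general B₀ B₁ hB₀conv hB₁conv hB₁pd Qs Rs hQs hRs ls hls u₁ hu₁ hu₁n hsimple
    ws hws
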